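/- Theorem (simulation of Boolean networks by Boolean P systems): Let F be a Boolean network over finite X and M ⊆ 2^X a Boolean mode. Let Π(F) be the associated Boolean P system and M̃ = { ⋃_{x∈m} R_x | m ∈ M } the corresponding quasimode. Then for all W, W' ⊆ X: the P system Π(F) can derive W' from W in one step under the mode induced by M̃ if and only if the Boolean network F can derive the state s' (indicator of W') from the state s (indicator of W) in one step under mode M (i.e., there exists m ∈ M such that s'(x) = f_x(s) for x ∈ m and s'(x) = s(x) for x ∉ m). -/

import Mathlib

attribute [local instance] Classical.propDecidable

structure PRule (α : Type*) where
  lhs : Set α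
  rhs : Set α
  guard : Set α → Prop

def applicable {α : Type*} (r : PRule α) (W : Set α) : Prop :=
  r.lhs ⊆ W ∧ r.guard W

def applyRules {α : Type*} (S : Set (PRule α)) (W : Set α) : Set α :=
  (W \ ⋃ r ∈ S, r.lhs) ∪ ⋃ r ∈ S, r.rhs

def Appl {α : Type*} (R : Set (PRule α)) (W : Set α) : Set (Set (PRule α)) :=
  {S | S ⊆ R ∧ ∀ r ∈ S, applicable r W}

def uprod {α : Type*} (A B : Set (Set α)) : Set (Set α) :=
  {s | ∃ a ∈ A, ∃ b ∈ B, s = a ∪ b}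

noncomputable def ind {X : Type*} (W : Set X) : X → Bool :=
  fun y => decide (y ∈ W)

noncomputable def insRule {X : Type*} (F : (X → Bool) → (X → Bool)) (x : X) : PRule X :=
  ⟨∅, {x}, fun W => F (ind W) x = true⟩

noncomputable def eraseRule {X : Type*} (F : (X → Bool) → (X → Bool)) (x : X) : PRule X :=
  ⟨{x}, ∅, fun W => ¬ (F (ind W) x = true)⟩

noncomputable def Rx {X : Type*} (F : (X → Bool) → (X → Bool)) (x : X) : Set (PRule X) :=
  {insRule F x, eraseRule F x}

/-!
The applicable rules of `⋃ x ∈ m, Rx F x` at `W` are the insertion of `x` for each `x ∈ m` with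
`f_x(s)` true, and the erasure of `x` for each `x ∈ m ∩ W` with `f_x(s)` false. Hence one step of
`Π(F)` sets each `x ∈ m` to `f_x(s)` and leaves every other variable unchanged, which is exactly the
update of `F` under `m`.
-/

section

variable {X : Type*} (F : (X → Bool) → (X → Bool)) (m W : Set X)

theorem applicable_insRule_iff (x : X) :
    applicable (insRule F x) W ↔ F (ind W) x = true := by
  simp [applicable, insRule]

theorem applicable_eraseRule_iff (x : X) :
    applicable (eraseRule F x) W ↔ x ∈ W ∧ F (ind W) x ≠ true := by
  simp [applicable, eraseRule]

theorem biUnion_lhs_applicable_Rx :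
    ⋃ r ∈ {r ∈ ⋃ x ∈ m, Rx F x | applicable r W}, r.lhs
      = {x | x ∈ m ∧ x ∈ W ∧ F (ind W) x ≠ true} := by
  ext x
  simp only [Set.mem_iUnion, Set.mem_ofPred_eq, exists_prop]
  constructor
  · rintro ⟨r, ⟨⟨y, hy, rfl | rfl⟩, happ⟩, hx⟩
    · simp [insRule] at hx
    · obtain rfl : x = y := hx
      exact ⟨hy, (applicable_eraseRule_iff F W x).1 happ⟩
  · rintro ⟨hm, happ⟩
    exact ⟨eraseRule F x, ⟨⟨x, hm, .inr rfl⟩, (applicable_eraseRule_iff F W x).2 happ⟩, rfl⟩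

theorem biUnion_rhs_applicable_Rx :
    ⋃ r ∈ {r ∈ ⋃ x ∈ m, Rx F x | applicable r W}, r.rhs
      = {x | x ∈ m ∧ F (ind W) x = true} := by
  ext x
  simp only [Set.mem_iUnion, Set.mem_ofPred_eq, exists_prop]
  constructor
  · rintro ⟨r, ⟨⟨y, hy, rfl | rfl⟩, happ⟩, hx⟩
    · obtain rfl : x = y := hx
      exact ⟨hy, (applicable_insRule_iff F W x).1 happ⟩
    · simp [eraseRule] at hx
  · rintro ⟨hm, happ⟩
    exact ⟨insRule F x, ⟨⟨x, hm, .inl rfl⟩, (applicable_insRule_iff F W x).2 happ⟩, rfl⟩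

theorem applyRules_applicable_biUnion_Rx :
    applyRules {r ∈ ⋃ x ∈ m, Rx F x | applicable r W} W
      = {x | if x ∈ m then F (ind W) x = true else x ∈ W} := by
  ext x
  rw [applyRules, biUnion_lhs_applicable_Rx, biUnion_rhs_applicable_Rx]
  by_cases hm : x ∈ m <;> by_cases hF : F (ind W) x = true <;> simp [hm, hF]

end

theorem stmt8_general {X : Type*} (F : (X → Bool) → (X → Bool))
    (M : Set (Set X)) (W W' : Set X) :
    (∃ T ∈ {S | ∃ m ∈ M, S = ⋃ x ∈ m, Rx F x},
        W' = applyRules {r ∈ T | applicable r W} W)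
      ↔ (∃ m ∈ M, W' = {x | (if x ∈ m then F (ind W) x = true else x ∈ W)}) := by
  constructor
  · rintro ⟨_, ⟨m, hm, rfl⟩, rfl⟩
    exact ⟨m, hm, applyRules_applicable_biUnion_Rx F m W⟩
  · rintro ⟨m, hm, rfl⟩
    exact ⟨_, ⟨m, hm, rfl⟩, (applyRules_applicable_biUnion_Rx F m W).symm⟩

theorem stmt8 {X : Type*} [Fintype X] (F : (X → Bool) → (X → Bool))
    (M : Set (Set X)) (W W' : Set X) :
    (∃ T ∈ {S | ∃ m ∈ M, S = ⋃ x ∈ m, Rx F x},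
        W' = applyRules {r ∈ T | applicable r W} W)
      ↔ (∃ m ∈ M, W' = {x | (if x ∈ m then F (ind W) x = true else x ∈ W)}) :=
  stmt8_general F M W W'
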